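/- Fix integers s ≥ 2, d ≥ 2 and reals 0 < K_2 < K_1. Let v ∈ ℝ^d have one coordinate equal to 1 and all other d−1 coordinates v_j satisfying K_2/(d−1) ≤ v_j ≤ K_1/(d−1). Define the NUQSGD quantization variance Δ_NUQ = ‖v‖² · Σ_{i=1}^d σ²_{L̂}(|v_i|/‖v‖) with the levels L̂, and the QSGDinf quantization variance Δ_Qinf = ‖v‖_∞² · Σ_{i=1}^d σ²_U(|v_i|/‖v‖_∞) with the uniform levels U = (0, 1/s, 2/s, …, (s−1)/s, 1), where ‖v‖_∞ = max_i |v_i|. If K_1/((d−1)·√(1 + K_2²/(d−1))) < 2^{−s} and (1 + K_1²/(d−1))·K_1·(K_1/(4(d−1)) + 2^{−s}) < K_2·(1/s − K_1/(d−1)), then Δ_NUQ < Δ_Qinf. -/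

import Mathlib

/-!
The max-norm of `v` is its coordinate `1`, and every other coordinate lies in the first uniform
bin `[0, 1/s]`, so the QSGDinf variance is exactly `∑ⱼ (1/s − vⱼ) vⱼ ≥ K₂ (1/s − K₁/(d−1))`.
For NUQSGD, `hcond1` puts every other normalized coordinate in the first bin `[0, 2^{-s}]`,
where it contributes at most `2^{-s} vⱼ / ‖v‖`, while `r = 1/‖v‖` lies in a dyadic bin
`[a, 2a]` with `2a ≤ 1`, on which the variance is at most `r (1 − r) / 2`. Since
`‖v‖² ≤ 1 + K₁²/(d−1)`, the NUQSGD variance is at most the left side of `hcond2`.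
-/

noncomputable section

/-- The index of the quantization bin containing the normalized coordinate `r`. -/
def levIdx (l : ℕ → ℝ) (s : ℕ) (r : ℝ) : ℕ := sSup {j | j ≤ s ∧ l j ≤ r}

/-- The per-coordinate variance of unbiased two-point stochastic quantization of `r` to the
adjacent levels: `σ²_L(r) = (l_{ℓ(r)+1} − r)(r − l_{ℓ(r)})`. -/
def sigmaSq (l : ℕ → ℝ) (s : ℕ) (r : ℝ) : ℝ :=
  (l (levIdx l s r + 1) - r) * (r - l (levIdx l s r))

/-- The exponentially spaced NUQSGD levels `(0, 2^{-s}, 2^{1-s}, …, 2^{-1}, 1)`: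
`l 0 = 0` and `l j = 2^{j-1-s}` for `j = 1, …, s+1`. -/
def nuqLevels (s : ℕ) : ℕ → ℝ :=
  fun j => if j = 0 then 0 else 2 ^ ((j : ℤ) - 1 - (s : ℤ))

/-- The uniformly spaced QSGDinf levels `(0, 1/s, 2/s, …, (s−1)/s, 1)`: `l j = j/s`
(the top level is `l s = 1`, so there are `s − 1` internal levels). -/
def unifLevels (s : ℕ) : ℕ → ℝ := fun j => (j : ℝ) / (s : ℝ)

open Finset

section Levels

variable {l : ℕ → ℝ} {s k : ℕ} {r : ℝ}

lemma levIdx_eq_of_mem_Ico (hl : Monotone l) (hk : k ≤ s)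
    (hr : r ∈ Set.Ico (l k) (l (k + 1))) :
    levIdx l s r = k := by
  have hbdd : BddAbove {j | j ≤ s ∧ l j ≤ r} := ⟨s, fun j hj => hj.1⟩
  refine le_antisymm (csSup_le ⟨k, hk, hr.1⟩ fun j hj => ?_) (le_csSup hbdd ⟨hk, hr.1⟩)
  by_contra! hkj
  exact (hr.2.trans_le (hl hkj)).not_ge hj.2

lemma sigmaSq_eq_of_mem_Ico (hl : Monotone l) (hk : k ≤ s)
    (hr : r ∈ Set.Ico (l k) (l (k + 1))) :
    sigmaSq l s r = (l (k + 1) - r) * (r - l k) := by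
  rw [sigmaSq, levIdx_eq_of_mem_Ico hl hk hr]

lemma levIdx_eq_self_of_le (h : l s ≤ r) : levIdx l s r = s :=
  IsGreatest.csSup_eq ⟨⟨le_rfl, h⟩, fun _ hj => hj.1⟩

lemma sigmaSq_succ_eq_zero (h : l s ≤ l (s + 1)) : sigmaSq l s (l (s + 1)) = 0 := by
  rw [sigmaSq, levIdx_eq_self_of_le h, sub_self, zero_mul]

lemma exists_mem_Ico_of_lt {n : ℕ} (h0 : l 0 ≤ r) (hn : r < l (n + 1)) :
    ∃ k ≤ n, r ∈ Set.Ico (l k) (l (k + 1)) := by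
  induction n with
  | zero => exact ⟨0, le_rfl, h0, hn⟩
  | succ n ih =>
    by_cases hr : r < l (n + 1)
    · obtain ⟨k, hk, hkr⟩ := ih hr
      exact ⟨k, hk.trans n.le_succ, hkr⟩
    · exact ⟨n + 1, le_rfl, not_lt.1 hr, hn⟩

end Levels

lemma two_mul_sub_mul_sub_le {a r : ℝ} (har : a ≤ r) (hra : r < 2 * a) (ha : 2 * a ≤ 1) :
    (2 * a - r) * (r - a) ≤ (1 - r) * r / 2 := by
  nlinarith [mul_le_mul_of_nonneg_right (show 2 * a - r ≤ 1 - r by linarith) (sub_nonneg.2 har)]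

section Nuq

variable {s k : ℕ} {r : ℝ}

lemma nuqLevels_zero : nuqLevels s 0 = 0 := if_pos rfl

lemma nuqLevels_of_ne_zero (hk : k ≠ 0) : nuqLevels s k = 2 ^ ((k : ℤ) - 1 - s) := if_neg hk

lemma nuqLevels_one : nuqLevels s 1 = 2 ^ (-(s : ℤ)) := by
  simp [nuqLevels_of_ne_zero]

lemma nuqLevels_succ_self : nuqLevels s (s + 1) = 1 := by
  simp [nuqLevels_of_ne_zero]

lemma nuqLevels_succ (hk : k ≠ 0) : nuqLevels s (k + 1) = 2 * nuqLevels s k := by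
  rw [nuqLevels_of_ne_zero hk, nuqLevels_of_ne_zero k.succ_ne_zero, ← zpow_one_add₀ two_ne_zero]
  congr 1
  push_cast
  ring

lemma monotone_nuqLevels : Monotone (nuqLevels s) := by
  refine monotone_nat_of_le_succ fun k => ?_
  rcases eq_or_ne k 0 with rfl | hk
  · rw [nuqLevels_zero, nuqLevels_one]
    positivity
  · rw [nuqLevels_succ hk, nuqLevels_of_ne_zero hk]
    linarith [zpow_pos (two_pos (α := ℝ)) ((k : ℤ) - 1 - s)]

lemma sigmaSq_nuqLevels_of_lt (hr0 : 0 ≤ r) (hr : r < 2 ^ (-(s : ℤ))) :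
    sigmaSq (nuqLevels s) s r = (2 ^ (-(s : ℤ)) - r) * r := by
  have hmem : r ∈ Set.Ico (nuqLevels s 0) (nuqLevels s (0 + 1)) := by
    rw [nuqLevels_zero, nuqLevels_one]
    exact ⟨hr0, hr⟩
  rw [sigmaSq_eq_of_mem_Ico monotone_nuqLevels s.zero_le hmem, nuqLevels_zero, nuqLevels_one,
    sub_zero]

lemma sigmaSq_nuqLevels_le (h1 : 2 ^ (-(s : ℤ)) ≤ r) (h2 : r < 1) :
    sigmaSq (nuqLevels s) s r ≤ (1 - r) * r / 2 := by
  obtain ⟨k, hks, hkr⟩ := exists_mem_Ico_of_lt (n := s) (l := nuqLevels s)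
    (nuqLevels_zero ▸ (zpow_pos two_pos _).le.trans h1) (nuqLevels_succ_self ▸ h2)
  have hk : k ≠ 0 := by
    rintro rfl
    exact (nuqLevels_one ▸ hkr.2).not_ge h1
  have htop : nuqLevels s (k + 1) ≤ 1 :=
    nuqLevels_succ_self (s := s) ▸ monotone_nuqLevels (Nat.succ_le_succ hks)
  rw [sigmaSq_eq_of_mem_Ico monotone_nuqLevels hks hkr]
  rw [nuqLevels_succ hk] at hkr htop ⊢
  exact two_mul_sub_mul_sub_le hkr.1 hkr.2 htop

end Nuq

section Unif

variable {s n : ℕ} {r : ℝ}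

lemma monotone_unifLevels : Monotone (unifLevels s) := fun _ _ h => by
  unfold unifLevels
  gcongr

lemma sigmaSq_unifLevels_of_lt (hr0 : 0 ≤ r) (hr : r < 1 / s) :
    sigmaSq (unifLevels s) n r = (1 / s - r) * r := by
  have hmem : r ∈ Set.Ico (unifLevels s 0) (unifLevels s (0 + 1)) := by
    simp only [unifLevels, Nat.cast_zero, Nat.cast_one, zero_add, zero_div]
    exact ⟨hr0, hr⟩
  rw [sigmaSq_eq_of_mem_Ico monotone_unifLevels n.zero_le hmem]
  simp [unifLevels]

lemma sigmaSq_unifLevels_one (hs : s ≠ 0) : sigmaSq (unifLevels s) (s - 1) 1 = 0 := by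
  have htop : unifLevels s (s - 1 + 1) = 1 := by
    rw [Nat.sub_add_cancel (Nat.one_le_iff_ne_zero.2 hs)]
    simp [unifLevels, hs]
  rw [← htop]
  exact sigmaSq_succ_eq_zero (monotone_unifLevels (s - 1).le_succ)

end Unif

section Vectors

variable {ι : Type*} [Fintype ι] {i0 : ι}

lemma iSup_abs_eq_one {x : ι → ℝ} (hx0 : x i0 = 1) (hx : ∀ j ≠ i0, |x j| ≤ 1) :
    ⨆ i, |x i| = 1 := by
  have hle : ∀ i, |x i| ≤ 1 := fun i => by
    rcases eq_or_ne i i0 with rfl | hi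
    · rw [hx0, abs_one]
    · exact hx i hi
  have : Nonempty ι := ⟨i0⟩
  exact le_antisymm (ciSup_le hle) (le_ciSup_of_le (Set.finite_range _).bddAbove i0 (by simp [hx0]))

variable [DecidableEq ι]

lemma sum_erase_le_card_sub_one_mul {f : ι → ℝ} {c : ℝ} (h : ∀ j ≠ i0, f j ≤ c) :
    ∑ j ∈ univ.erase i0, f j ≤ (Fintype.card ι - 1) * c := by
  have : Nonempty ι := ⟨i0⟩
  have := sum_le_card_nsmul (univ.erase i0) f c fun j hj => h j (ne_of_mem_erase hj)
  rwa [card_erase_of_mem (mem_univ i0), card_univ, nsmul_eq_mul,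
    Nat.cast_pred Fintype.card_pos] at this

lemma card_sub_one_mul_le_sum_erase {f : ι → ℝ} {c : ℝ} (h : ∀ j ≠ i0, c ≤ f j) :
    (Fintype.card ι - 1) * c ≤ ∑ j ∈ univ.erase i0, f j := by
  have : Nonempty ι := ⟨i0⟩
  have := card_nsmul_le_sum (univ.erase i0) f c fun j hj => h j (ne_of_mem_erase hj)
  rwa [card_erase_of_mem (mem_univ i0), card_univ, nsmul_eq_mul,
    Nat.cast_pred Fintype.card_pos] at this

lemma norm_sq_eq_one_add_sum_erase {v : EuclideanSpace ℝ ι} (hv0 : v i0 = 1) :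
    ‖v‖ ^ 2 = 1 + ∑ j ∈ univ.erase i0, v j ^ 2 := by
  rw [EuclideanSpace.norm_sq_eq, ← add_sum_erase _ _ (mem_univ i0)]
  simp [hv0]

lemma qsgdinf_variance_eq {s : ℕ} (hs : s ≠ 0) {x : ι → ℝ} (hx0 : x i0 = 1)
    (hx : ∀ j ≠ i0, 0 ≤ x j ∧ x j < 1 / s) :
    (⨆ i, |x i|) ^ 2 * ∑ i, sigmaSq (unifLevels s) (s - 1) (|x i| / ⨆ i, |x i|) =
      ∑ j ∈ univ.erase i0, (1 / s - x j) * x j := by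
  have h1s : (1 : ℝ) / s ≤ 1 :=
    div_le_one_of_le₀ (by exact_mod_cast Nat.one_le_iff_ne_zero.2 hs) s.cast_nonneg
  have hsup : ⨆ i, |x i| = 1 := iSup_abs_eq_one hx0 fun j hj => by
    rw [abs_of_nonneg (hx j hj).1]
    exact ((hx j hj).2.trans_le h1s).le
  rw [hsup, one_pow, one_mul, ← add_sum_erase _ _ (mem_univ i0), hx0, abs_one, div_one,
    sigmaSq_unifLevels_one hs, zero_add]
  refine sum_congr rfl fun j hj => ?_
  obtain ⟨h0, h1⟩ := hx j (ne_of_mem_erase hj)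
  rw [div_one, abs_of_nonneg h0, sigmaSq_unifLevels_of_lt h0 h1]

lemma nuqsgd_variance_le {s : ℕ} {v : EuclideanSpace ℝ ι} (hv0 : v i0 = 1)
    (hv : ∀ j ≠ i0, 0 ≤ v j ∧ v j / ‖v‖ < 2 ^ (-(s : ℤ))) (h1 : 1 < ‖v‖)
    (h2 : 2 ^ (-(s : ℤ)) ≤ 1 / ‖v‖) :
    ‖v‖ ^ 2 * ∑ i, sigmaSq (nuqLevels s) s (|v i| / ‖v‖) ≤
      (‖v‖ - 1) / 2 + 2 ^ (-(s : ℤ)) * ‖v‖ * ∑ j ∈ univ.erase i0, v j := by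
  have hN : 0 < ‖v‖ := one_pos.trans h1
  have hmax : sigmaSq (nuqLevels s) s (1 / ‖v‖) ≤ (1 - 1 / ‖v‖) * (1 / ‖v‖) / 2 :=
    sigmaSq_nuqLevels_le h2 ((div_lt_one hN).2 h1)
  have hrest : ∀ j ∈ univ.erase i0,
      sigmaSq (nuqLevels s) s (|v j| / ‖v‖) ≤ 2 ^ (-(s : ℤ)) * v j / ‖v‖ := by
    intro j hj
    obtain ⟨h0, hlt⟩ := hv j (ne_of_mem_erase hj)
    have hr0 : 0 ≤ v j / ‖v‖ := by positivity
    rw [abs_of_nonneg h0, sigmaSq_nuqLevels_of_lt hr0 hlt, mul_div_assoc]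
    nlinarith
  rw [← add_sum_erase _ _ (mem_univ i0), hv0, abs_one]
  calc ‖v‖ ^ 2 * (sigmaSq (nuqLevels s) s (1 / ‖v‖) +
        ∑ j ∈ univ.erase i0, sigmaSq (nuqLevels s) s (|v j| / ‖v‖))
      ≤ ‖v‖ ^ 2 * ((1 - 1 / ‖v‖) * (1 / ‖v‖) / 2 +
        ∑ j ∈ univ.erase i0, 2 ^ (-(s : ℤ)) * v j / ‖v‖) := by
        gcongr with j hj
        exact hrest j hj
    _ = _ := by
        rw [← sum_div, ← mul_sum]
        field_simp

end Vectors

lemma div_lt_and_mul_lt_of_lt_mul_sub {D K1 K2 t u : ℝ} (hD : 0 < D) (hK2 : 0 < K2)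
    (hK12 : K2 < K1) (ht : 0 ≤ t)
    (h : (1 + K1 ^ 2 / D) * K1 * (K1 / (4 * D) + t) < K2 * (u - K1 / D)) :
    K1 / D < u ∧ (1 + K1 ^ 2 / D) * t < u := by
  have hK1 : 0 < K1 := hK2.trans hK12
  have hlhs : 0 ≤ (1 + K1 ^ 2 / D) * K1 * (K1 / (4 * D)) := by positivity
  have hu : K1 / D < u := by
    by_contra! hu
    have : 0 ≤ (1 + K1 ^ 2 / D) * K1 * t := by positivity
    nlinarith [mul_nonneg hK2.le (sub_nonneg.2 hu)]
  refine ⟨hu, lt_of_mul_lt_mul_left ?_ hK1.le⟩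
  nlinarith [div_pos hK1 hD]

section CoordinateBounds

variable {s d : ℕ} {K1 K2 : ℝ} {v : EuclideanSpace ℝ (Fin d)} {i0 : Fin d}

lemma norm_sq_sub_one_mem_Icc (hD : (0 : ℝ) < d - 1) (hK2 : 0 < K2) (hvi0 : v i0 = 1)
    (hvj : ∀ j ≠ i0, K2 / ((d : ℝ) - 1) ≤ v j ∧ v j ≤ K1 / ((d : ℝ) - 1)) :
    ‖v‖ ^ 2 - 1 ∈ Set.Icc (K2 ^ 2 / ((d : ℝ) - 1)) (K1 ^ 2 / ((d : ℝ) - 1)) := by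
  have hsq (K : ℝ) :
      ((Fintype.card (Fin d) : ℝ) - 1) * (K / (d - 1)) ^ 2 = K ^ 2 / (d - 1) := by
    rw [Fintype.card_fin]
    field_simp
  have ha : 0 ≤ K2 / ((d : ℝ) - 1) := (div_pos hK2 hD).le
  rw [norm_sq_eq_one_add_sum_erase hvi0, add_sub_cancel_left, ← hsq, ← hsq]
  exact ⟨card_sub_one_mul_le_sum_erase fun j hj => pow_le_pow_left₀ ha (hvj j hj).1 2,
    sum_erase_le_card_sub_one_mul fun j hj =>
      pow_le_pow_left₀ (ha.trans (hvj j hj).1) (hvj j hj).2 2⟩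

lemma nuqsgd_variance_le_of_coord_bounds (hD : (0 : ℝ) < d - 1) (hK2 : 0 < K2) (hK12 : K2 < K1)
    (hvi0 : v i0 = 1)
    (hvj : ∀ j ≠ i0, K2 / ((d : ℝ) - 1) ≤ v j ∧ v j ≤ K1 / ((d : ℝ) - 1))
    (hcond1 : K1 / (((d : ℝ) - 1) * √(1 + K2 ^ 2 / ((d : ℝ) - 1))) < 2 ^ (-(s : ℤ)))
    (htop : (1 + K1 ^ 2 / ((d : ℝ) - 1)) * 2 ^ (-(s : ℤ)) ≤ 1) :
    ‖v‖ ^ 2 * ∑ i, sigmaSq (nuqLevels s) s (|v i| / ‖v‖) ≤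
      (1 + K1 ^ 2 / ((d : ℝ) - 1)) * K1 * (K1 / (4 * ((d : ℝ) - 1)) + 2 ^ (-(s : ℤ))) := by
  have hv0 : ∀ j ≠ i0, 0 ≤ v j := fun j hj => (div_pos hK2 hD).le.trans (hvj j hj).1
  obtain ⟨hS_lb, hS_ub⟩ := norm_sq_sub_one_mem_Icc hD hK2 hvi0 hvj
  have hN1 : 1 < ‖v‖ := by nlinarith [norm_nonneg v, div_pos (pow_pos hK2 2) hD]
  have hNX : ‖v‖ ≤ 1 + K1 ^ 2 / (d - 1) := by nlinarith
  have hsmall : ∀ j ≠ i0, 0 ≤ v j ∧ v j / ‖v‖ < 2 ^ (-(s : ℤ)) := by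
    refine fun j hj => ⟨hv0 j hj, lt_of_le_of_lt ?_ hcond1⟩
    have hsqrt : √(1 + K2 ^ 2 / (d - 1)) ≤ ‖v‖ :=
      (Real.sqrt_le_left (norm_nonneg v)).2 (by linarith)
    rw [← div_div]
    exact div_le_div₀ (div_pos (hK2.trans hK12) hD).le (hvj j hj).2 (by positivity) hsqrt
  have hbig : (2 : ℝ) ^ (-(s : ℤ)) ≤ 1 / ‖v‖ := by
    rw [le_div_iff₀ (one_pos.trans hN1)]
    nlinarith [zpow_pos (two_pos (α := ℝ)) (-(s : ℤ))]
  have hsum : ∑ j ∈ univ.erase i0, v j ≤ K1 := by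
    simpa [mul_div_cancel₀ _ hD.ne'] using sum_erase_le_card_sub_one_mul fun j hj => (hvj j hj).2
  calc _ ≤ (‖v‖ - 1) / 2 + 2 ^ (-(s : ℤ)) * ‖v‖ * ∑ j ∈ univ.erase i0, v j :=
        nuqsgd_variance_le hvi0 hsmall hN1 hbig
    _ ≤ (1 + K1 ^ 2 / (d - 1)) * (K1 ^ 2 / (d - 1)) / 4 +
          2 ^ (-(s : ℤ)) * (1 + K1 ^ 2 / (d - 1)) * K1 := by
        have hmax : (‖v‖ - 1) / 2 ≤ (1 + K1 ^ 2 / (d - 1)) * (K1 ^ 2 / (d - 1)) / 4 := by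
          nlinarith [div_nonneg (sq_nonneg K1) hD.le]
        gcongr
        exact sum_nonneg fun j hj => hv0 j (ne_of_mem_erase hj)
    _ = _ := by field_simp

lemma le_qsgdinf_variance_of_coord_bounds (hs : s ≠ 0) (hD : (0 : ℝ) < d - 1) (hK2 : 0 < K2)
    (hvi0 : v i0 = 1)
    (hvj : ∀ j ≠ i0, K2 / ((d : ℝ) - 1) ≤ v j ∧ v j ≤ K1 / ((d : ℝ) - 1))
    (hb : K1 / ((d : ℝ) - 1) < 1 / s) :
    K2 * (1 / (s : ℝ) - K1 / ((d : ℝ) - 1)) ≤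
      (⨆ i, |v i|) ^ 2 * ∑ i, sigmaSq (unifLevels s) (s - 1) (|v i| / ⨆ i, |v i|) := by
  have ha : 0 ≤ K2 / ((d : ℝ) - 1) := (div_pos hK2 hD).le
  rw [qsgdinf_variance_eq hs hvi0 fun j hj => ⟨ha.trans (hvj j hj).1, (hvj j hj).2.trans_lt hb⟩]
  calc K2 * (1 / (s : ℝ) - K1 / ((d : ℝ) - 1))
      = (Fintype.card (Fin d) - 1) * ((1 / s - K1 / (d - 1)) * (K2 / (d - 1))) := by
        rw [Fintype.card_fin]
        field_simp
    _ ≤ _ := card_sub_one_mul_le_sum_erase fun j hj => by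
        obtain ⟨h1, h2⟩ := hvj j hj
        exact mul_le_mul (by linarith) h1 ha (by linarith)

end CoordinateBounds

/-- **Theorem 14 (NUQSGD vs QSGDinf)**: for a vector with one coordinate equal to `1` and the
other `d − 1` coordinates in `[K₂/(d−1), K₁/(d−1)]`, under the stated conditions on `d`, `s`,
`K₁`, `K₂`, the quantization variance of NUQSGD (Euclidean normalization, levels `L̂`) is
strictly smaller than that of QSGDinf (max-norm normalization, uniform levels). -/
theorem nuqsgd_variance_lt_qsgdinf
    (s d : ℕ) (hs : 2 ≤ s) (hd : 2 ≤ d)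
    (K1 K2 : ℝ) (hK2 : 0 < K2) (hK12 : K2 < K1)
    (v : EuclideanSpace ℝ (Fin d)) (i0 : Fin d)
    (hvi0 : v i0 = 1)
    (hvj : ∀ j : Fin d, j ≠ i0 →
      K2 / ((d:ℝ) - 1) ≤ v j ∧ v j ≤ K1 / ((d:ℝ) - 1))
    (hcond1 : K1 / (((d:ℝ) - 1) * Real.sqrt (1 + K2 ^ 2 / ((d:ℝ) - 1))) < (2:ℝ) ^ (-(s:ℤ)))
    (hcond2 : (1 + K1 ^ 2 / ((d:ℝ) - 1)) * K1 * (K1 / (4 * ((d:ℝ) - 1)) + (2:ℝ) ^ (-(s:ℤ))) <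
      K2 * (1 / (s:ℝ) - K1 / ((d:ℝ) - 1))) :
    ‖v‖ ^ 2 * ∑ i, sigmaSq (nuqLevels s) s (|v i| / ‖v‖) <
      (⨆ i, |v i|) ^ 2 * ∑ i, sigmaSq (unifLevels s) (s - 1) (|v i| / ⨆ i, |v i|) := by
  have hD : (0 : ℝ) < d - 1 := by
    have : (2 : ℝ) ≤ d := by exact_mod_cast hd
    linarith
  have hs1 : (1 : ℝ) / s ≤ 1 :=
    div_le_one_of_le₀ (by exact_mod_cast (by omega : 1 ≤ s)) s.cast_nonneg
  obtain ⟨hb, htop⟩ := div_lt_and_mul_lt_of_lt_mul_sub hD hK2 hK12 (by positivity) hcond2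
  calc _ ≤ _ :=
        nuqsgd_variance_le_of_coord_bounds hD hK2 hK12 hvi0 hvj hcond1 (htop.trans_le hs1).le
    _ < _ := hcond2
    _ ≤ _ := le_qsgdinf_variance_of_coord_bounds (by omega) hD hK2 hvi0 hvj hb
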